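/- Restriction to a face: if a trivariate polynomial p of degree at most m vanishes at all Lagrange nodes of the reference tetrahedron lying on the face plane {z = 0}, then p vanishes identically on that plane. -/
import Mathlib
open Polynomial

private lemma uni_zero (n : ℕ) (g : Polynomial ℝ) (hdeg : g.natDegree ≤ n)
    (h : ∀ j : ℕ, j ≤ n → g.eval (j : ℝ) = 0) : g = 0 := by
  apply Polynomial.eq_zero_of_natDegree_lt_card_of_eval_eq_zero g
    (f := fun j : Fin (n+1) => ((j : ℕ) : ℝ))
  · exact fun a b hab => Fin.val_injective (Nat.cast_injective hab)
  · exact fun j => h j (Nat.lt_succ_iff.mp j.isLt)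
  · simpa using Nat.lt_succ_of_le hdeg

private lemma eval_C_natDegree (q : Polynomial (Polynomial ℝ)) (c : ℝ) (n : ℕ)
    (hc : ∀ i, (q.coeff i).natDegree ≤ n - i) :
    (q.eval (Polynomial.C c)).natDegree ≤ n := by
  rw [Polynomial.eval_eq_sum_range]
  apply Polynomial.natDegree_sum_le_of_forall_le
  intro i _
  calc (q.coeff i * Polynomial.C c ^ i).natDegree
      ≤ (q.coeff i).natDegree + (Polynomial.C c ^ i).natDegree := natDegree_mul_le
    _ ≤ (n - i) + 0 := by
        refine add_le_add (hc i) ?_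
        simp [Polynomial.natDegree_pow]
    _ ≤ n := by omega

private lemma key : ∀ (d : ℕ) (n : ℕ) (c : ℝ) (q : Polynomial (Polynomial ℝ)),
    q.natDegree ≤ d → d ≤ n →
    (∀ i, (q.coeff i).natDegree ≤ n - i) →
    (∀ i j : ℕ, i ≤ d → i + j ≤ n →
      Polynomial.eval (j : ℝ) (Polynomial.eval (Polynomial.C (c + i)) q) = 0) →
    q = 0 := by
  intro d
  induction d with
  | zero =>
    intro n c q hdq _ hc hv
    rw [Polynomial.eq_C_of_natDegree_le_zero hdq]
    rw [Polynomial.eq_C_of_natDegree_le_zero hdq] at hv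
    have : q.coeff 0 = 0 := by
      apply uni_zero n _ (le_trans (hc 0) (by omega))
      intro j hj
      simpa using hv 0 j (le_refl 0) (by omega)
    rw [this]; simp
  | succ d ih =>
    intro n c q hdq hdn hc hv
    have hg : q.eval (Polynomial.C c) = 0 := by
      apply uni_zero n _ (eval_C_natDegree q c n hc)
      intro j hj
      simpa using hv 0 j (by omega) (by omega)
    have hdvd : (X - Polynomial.C (Polynomial.C c)) ∣ q :=
      Polynomial.dvd_iff_isRoot.mpr hg
    obtain ⟨r, hr⟩ := hdvd
    by_cases hr0 : r = 0
    · rw [hr, hr0, mul_zero]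
    have hXC : (X - Polynomial.C (Polynomial.C c)) ≠ (0 : Polynomial (Polynomial ℝ)) :=
      Polynomial.X_sub_C_ne_zero _
    have hdr : r.natDegree ≤ d := by
      have := Polynomial.natDegree_mul hXC hr0
      rw [← hr, Polynomial.natDegree_X_sub_C] at this
      omega
    have hcoeff : ∀ i, q.coeff (i+1) = r.coeff i - Polynomial.C c * r.coeff (i+1) := by
      intro i
      rw [hr, sub_mul, Polynomial.coeff_sub, Polynomial.coeff_X_mul, Polynomial.coeff_C_mul]
    have hrc : ∀ k i, d + 1 ≤ i + k → (r.coeff i).natDegree ≤ (n-1) - i := by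
      intro k
      induction k with
      | zero =>
        intro i hi
        rw [Polynomial.coeff_eq_zero_of_natDegree_lt (by omega)]
        simp
      | succ k ihk =>
        intro i hi
        have h1 : r.coeff i = q.coeff (i+1) + Polynomial.C c * r.coeff (i+1) := by
          rw [hcoeff i]; ring
        rw [h1]
        calc (q.coeff (i+1) + Polynomial.C c * r.coeff (i+1)).natDegree
            ≤ max (q.coeff (i+1)).natDegree (Polynomial.C c * r.coeff (i+1)).natDegree :=
              Polynomial.natDegree_add_le _ _
          _ ≤ (n-1) - i := by
              apply max_le
              · have := hc (i+1); omega
              · have := Polynomial.natDegree_C_mul_le c (r.coeff (i+1))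
                have := ihk (i+1) (by omega)
                omega
    have hrv : ∀ i j : ℕ, i ≤ d → i + j ≤ n - 1 →
        Polynomial.eval (j : ℝ) (Polynomial.eval (Polynomial.C ((c+1) + i)) r) = 0 := by
      intro i j hi hij
      have hq := hv (i+1) j (by omega) (by omega)
      rw [hr] at hq
      simp only [Polynomial.eval_mul, Polynomial.eval_sub, Polynomial.eval_X,
        Polynomial.eval_C] at hq
      have hcast : (c + ((i:ℝ)+1)) - c = (i:ℝ) + 1 := by ring
      rw [Nat.cast_add, Nat.cast_one] at hq
      rw [hcast] at hq
      have hne : ((i:ℝ) + 1) ≠ 0 := by positivity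
      rcases mul_eq_zero.mp hq with h | h
      · exact absurd h hne
      · have : (c + 1) + (i:ℝ) = c + ((i:ℝ)+1) := by ring
        rw [this]
        exact h
    have : r = 0 := ih (n-1) (c+1) r hdr (by omega)
      (fun i => hrc (d+1) i (by omega)) hrv
    rw [hr, this, mul_zero]

private noncomputable def fCC : ℝ →+* Polynomial (Polynomial ℝ) :=
  (Polynomial.C : Polynomial ℝ →+* Polynomial (Polynomial ℝ)).comp Polynomial.C

private noncomputable def gvec (s : ℝ) : Fin 3 → Polynomial (Polynomial ℝ) :=
  ![Polynomial.C (Polynomial.C s) * X, Polynomial.C (Polynomial.C s * X), 0]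

private lemma evalq (s x y : ℝ) (p : MvPolynomial (Fin 3) ℝ) :
    Polynomial.eval y (Polynomial.eval (Polynomial.C x) (MvPolynomial.eval₂ fCC (gvec s) p)) =
      MvPolynomial.eval ![s * x, s * y, 0] p := by
  have h1 : Polynomial.eval y (Polynomial.eval (Polynomial.C x)
      (MvPolynomial.eval₂ fCC (gvec s) p)) =
      ((Polynomial.evalRingHom y).comp (Polynomial.evalRingHom (Polynomial.C x)))
        (MvPolynomial.eval₂ fCC (gvec s) p) := rfl
  rw [h1, MvPolynomial.eval₂_comp_left _ fCC (gvec s) p]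
  have h2 : ((Polynomial.evalRingHom y).comp
      (Polynomial.evalRingHom (Polynomial.C x))).comp fCC = RingHom.id ℝ := by
    ext a
    simp [fCC]
  have h3 : ((⇑((Polynomial.evalRingHom y).comp (Polynomial.evalRingHom (Polynomial.C x))))
      ∘ gvec s) = ![s * x, s * y, 0] := by
    funext i
    simp only [Function.comp_apply, RingHom.coe_comp, Polynomial.coe_evalRingHom]
    fin_cases i
    · show Polynomial.eval y (Polynomial.eval (Polynomial.C x)
        (Polynomial.C (Polynomial.C s) * X)) = s * x
      simp
    · show Polynomial.eval y (Polynomial.eval (Polynomial.C x)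
        (Polynomial.C (Polynomial.C s * X))) = s * y
      simp
    · show Polynomial.eval y (Polynomial.eval (Polynomial.C x)
        (0 : Polynomial (Polynomial ℝ))) = 0
      simp
  rw [h2, h3]
  rfl

private lemma term_eq (ca s : ℝ) (a : Fin 3 →₀ ℕ) (h2 : a 2 = 0) :
    fCC ca * ∏ i, gvec s i ^ a i =
      Polynomial.C (Polynomial.C ca * Polynomial.C s ^ a 0 * (Polynomial.C s * X) ^ a 1)
        * X ^ a 0 := by
  simp only [Fin.prod_univ_three, gvec, fCC, Matrix.cons_val_zero, Matrix.cons_val_one,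
    Matrix.head_cons, Matrix.cons_val_two, Matrix.tail_cons, h2, pow_zero, mul_one,
    RingHom.coe_comp, Function.comp_apply, mul_pow, map_mul, map_pow]
  ring

private lemma asum (m : ℕ) (p : MvPolynomial (Fin 3) ℝ) (hp : p.totalDegree ≤ m)
    (a : Fin 3 →₀ ℕ) (ha : a ∈ p.support) : a 0 + a 1 + a 2 ≤ m := by
  have h := MvPolynomial.le_totalDegree ha
  have : (a.sum fun _ e => e) = a 0 + a 1 + a 2 := by
    rw [Finsupp.sum_fintype _ _ (fun _ => rfl), Fin.sum_univ_three]
  omega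

private lemma q_natDegree (m : ℕ) (s : ℝ) (p : MvPolynomial (Fin 3) ℝ)
    (hp : p.totalDegree ≤ m) :
    (MvPolynomial.eval₂ fCC (gvec s) p).natDegree ≤ m := by
  rw [MvPolynomial.eval₂_eq']
  apply Polynomial.natDegree_sum_le_of_forall_le
  intro a ha
  by_cases h2 : a 2 = 0
  · rw [term_eq _ _ _ h2]
    calc (Polynomial.C (Polynomial.C (p.coeff a) * Polynomial.C s ^ a 0
          * (Polynomial.C s * X) ^ a 1) * X ^ a 0).natDegree
        ≤ 0 + (X ^ a 0 : Polynomial (Polynomial ℝ)).natDegree := by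
          apply Polynomial.natDegree_mul_le.trans
          gcongr
          exact le_of_eq (Polynomial.natDegree_C _)
      _ ≤ m := by
          rw [Polynomial.natDegree_X_pow]
          have := asum m p hp a ha
          omega
  · have : (0 : Polynomial (Polynomial ℝ)) ^ a 2 = 0 := by
      rw [zero_pow h2]
    simp only [Fin.prod_univ_three, gvec, Matrix.cons_val_zero, Matrix.cons_val_one,
      Matrix.head_cons, Matrix.cons_val_two, Matrix.tail_cons, this, mul_zero, zero_mul]
    simp

private lemma q_coeff_bound (m : ℕ) (s : ℝ) (p : MvPolynomial (Fin 3) ℝ)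
    (hp : p.totalDegree ≤ m) (i : ℕ) :
    ((MvPolynomial.eval₂ fCC (gvec s) p).coeff i).natDegree ≤ m - i := by
  rw [MvPolynomial.eval₂_eq', Polynomial.finset_sum_coeff]
  apply Polynomial.natDegree_sum_le_of_forall_le
  intro a ha
  by_cases h2 : a 2 = 0
  · rw [term_eq _ _ _ h2, Polynomial.coeff_C_mul, Polynomial.coeff_X_pow]
    by_cases hi : i = a 0
    · rw [if_pos hi, mul_one]
      have hsum := asum m p hp a ha
      calc (Polynomial.C (p.coeff a) * Polynomial.C s ^ a 0
            * (Polynomial.C s * X) ^ a 1).natDegree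
          ≤ (Polynomial.C (p.coeff a) * Polynomial.C s ^ a 0).natDegree
              + ((Polynomial.C s * X) ^ a 1).natDegree := natDegree_mul_le
        _ ≤ 0 + a 1 := by
            gcongr
            · calc (Polynomial.C (p.coeff a) * Polynomial.C s ^ a 0).natDegree
                  ≤ (Polynomial.C (p.coeff a)).natDegree
                      + (Polynomial.C s ^ a 0 : Polynomial ℝ).natDegree := natDegree_mul_le
                _ ≤ 0 := by
                    simp [Polynomial.natDegree_pow]
            · calc ((Polynomial.C s * X) ^ a 1 : Polynomial ℝ).natDegree
                  ≤ a 1 * (Polynomial.C s * X).natDegree := Polynomial.natDegree_pow_le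
                _ ≤ a 1 * 1 := by
                    gcongr
                    apply Polynomial.natDegree_mul_le.trans
                    simp
                _ = a 1 := mul_one _
        _ ≤ m - i := by omega
    · rw [if_neg hi, mul_zero]
      simp
  · have : (0 : Polynomial (Polynomial ℝ)) ^ a 2 = 0 := by
      rw [zero_pow h2]
    simp only [Fin.prod_univ_three, gvec, Matrix.cons_val_zero, Matrix.cons_val_one,
      Matrix.head_cons, Matrix.cons_val_two, Matrix.tail_cons, this, mul_zero, zero_mul]
    simp

theorem poly_vanishing_on_face_nodes (m : ℕ) (hm : 1 ≤ m)
    (p : MvPolynomial (Fin 3) ℝ) (hp : p.totalDegree ≤ m)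
    (hv : ∀ i j : ℕ, i + j ≤ m →
      MvPolynomial.eval ![(i : ℝ) / m, (j : ℝ) / m, 0] p = 0) :
    ∀ x y : ℝ, MvPolynomial.eval ![x, y, 0] p = 0 := by
  have hm0 : (m : ℝ) ≠ 0 := Nat.cast_ne_zero.mpr (by omega)
  set s : ℝ := (m : ℝ)⁻¹ with hs
  set q := MvPolynomial.eval₂ fCC (gvec s) p with hq
  have hq0 : q = 0 := by
    apply key m m 0 q (q_natDegree m s p hp) le_rfl (q_coeff_bound m s p hp)
    intro i j hi hij
    rw [zero_add, hq, evalq]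
    have h1 : s * (i : ℝ) = (i : ℝ) / m := by
      rw [hs]; ring
    have h2 : s * (j : ℝ) = (j : ℝ) / m := by
      rw [hs]; ring
    rw [h1, h2]
    exact hv i j hij
  intro x y
  have := evalq s (m * x) (m * y) p
  rw [← hq, hq0] at this
  simp only [Polynomial.eval_zero] at this
  have hx : s * ((m : ℝ) * x) = x := by
    rw [hs]; field_simp
  have hy : s * ((m : ℝ) * y) = y := by
    rw [hs]; field_simp
  rw [hx, hy] at this
  exact this.symm
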